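/- arXiv:1702.00080 — 2 statements merged into one kernel-verified Lean document; each statement's English description precedes it below -/
import Mathlib

section
/- Suppose p(t) ∈ ℚ[t] satisfies both p(t) = Σ_{i=0}^d [C(t+i, i+1) − C(t+i−e_i, i+1)] for integers e_0 ≥ e_1 ≥ … ≥ e_d > 0 and p(t) = Σ_{j=1}^r C(t + b_j − (j−1), b_j) for integers b_1 ≥ b_2 ≥ … ≥ b_r ≥ 0. Then r = e_0, and the partition (b_1,…,b_r) is conjugate to (e_1,…,e_d): setting e_{d+1} := 0, for every 0 ≤ i ≤ d and every index j with e_{i+1} < j ≤ e_i one has b_j = i. -/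
/-- The polynomial binomial coefficient `C(t+a, b) ∈ ℚ[t]`. -/
noncomputable def polyBinom (a b : ℤ) : Polynomial ℚ :=
  if 0 ≤ b then
    (Nat.factorial b.toNat : ℚ)⁻¹ •
      (descPochhammer ℚ b.toNat).comp (Polynomial.X + Polynomial.C (a : ℚ))
  else 0

/-- The Gotzmann expression `Σ_{j=1}^r C(t + b_j − (j−1), b_j)`. -/
noncomputable def gotzmannSum (r : ℕ) (b : Fin r → ℤ) : Polynomial ℚ :=
  ∑ j : Fin r, polyBinom (b j - ((j : ℕ) : ℤ)) (b j)

/-- The Macaulay–Hartshorne expression `Σ_{i=0}^d [C(t+i, i+1) − C(t+i−e_i, i+1)]`. -/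
noncomputable def mhSum (d : ℕ) (e : Fin (d + 1) → ℤ) : Polynomial ℚ :=
  ∑ i : Fin (d + 1),
    (polyBinom ((i : ℕ) : ℤ) (((i : ℕ) : ℤ) + 1) -
      polyBinom (((i : ℕ) : ℤ) - e i) (((i : ℕ) : ℤ) + 1))

/-!
Pascal's rule telescopes both expressions into the same sum over the cells of a Young diagram.
The `i`-th Macaulay–Hartshorne term is the sum of `C(t+i-1-k, i)` over `k < e_i` (row `i`), and
the hockey-stick identity sums the column `k`, i.e. the cells `(i, k)` with `i < e'_k` for the
conjugate partition `e'`, to the Gotzmann term `C(t + b - k, b)` with `b = e'_k - 1`. So `p` is the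
Gotzmann expression of `(e'_k - 1)_k`, and a Gotzmann expression determines its partition: its
degree is `b_1`, and removing the first term leaves the Gotzmann expression of `(b_2, …)`
evaluated at `t - 1`.
-/

open Polynomial Finset

theorem polyBinom_of_neg (a : ℤ) {b : ℤ} (hb : b < 0) : polyBinom a b = 0 := by
  simp [polyBinom, not_le.mpr hb]

theorem polyBinom_of_nonneg (a : ℤ) {b : ℤ} (hb : 0 ≤ b) :
    polyBinom a b = (b.toNat.factorial : ℚ)⁻¹ • (descPochhammer ℚ b.toNat).comp (X + C (a : ℚ)) :=
  if_pos hb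

theorem polyBinom_zero (a : ℤ) : polyBinom a 0 = 1 := by
  simp [polyBinom]

theorem eval_polyBinom (a : ℤ) {b : ℤ} (hb : 0 ≤ b) (x : ℚ) :
    (polyBinom a b).eval x =
      (b.toNat.factorial : ℚ)⁻¹ * (descPochhammer ℚ b.toNat).eval (x + a) := by
  simp [polyBinom_of_nonneg a hb, eval_comp]

theorem polyBinom_add_one (a b : ℤ) :
    polyBinom (a + 1) b = polyBinom a b + polyBinom a (b - 1) := by
  obtain hb | rfl | hb := lt_trichotomy b 0
  · simp [polyBinom_of_neg _ hb, polyBinom_of_neg _ (show b - 1 < 0 by omega)]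
  · simp [polyBinom_zero, polyBinom_of_neg]
  obtain ⟨n, rfl⟩ : ∃ n : ℕ, b = n + 1 := ⟨(b - 1).toNat, by omega⟩
  refine Polynomial.funext fun x => ?_
  rw [eval_add, eval_polyBinom _ (by omega), eval_polyBinom _ (by omega),
    eval_polyBinom _ (by omega), add_sub_cancel_right, Int.toNat_natCast_add_one, Int.toNat_natCast,
    Int.cast_add, Int.cast_one, ← add_assoc]
  generalize x + a = y
  have hsucc : (descPochhammer ℚ (n + 1)).eval (y + 1) = (y + 1) * (descPochhammer ℚ n).eval y := by
    simp [descPochhammer_succ_left, eval_comp]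
  rw [hsucc, descPochhammer_succ_eval, Nat.factorial_succ, Nat.cast_mul]
  field_simp
  push_cast
  ring

theorem polyBinom_comp_X_sub_one (a b : ℤ) :
    (polyBinom a b).comp (X - 1) = polyBinom (a - 1) b := by
  obtain hb | hb := lt_or_ge b 0
  · simp [polyBinom_of_neg _ hb]
  rw [polyBinom_of_nonneg _ hb, polyBinom_of_nonneg _ hb, smul_comp, comp_assoc]
  congr 3
  simp only [add_comp, X_comp, C_comp, Int.cast_sub, Int.cast_one, C_sub, C_1]
  ring

theorem coeff_polyBinom_of_lt (a : ℤ) {b : ℤ} {k : ℕ} (hk : b < k) :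
    (polyBinom a b).coeff k = 0 := by
  obtain hb | hb := lt_or_ge b 0
  · simp [polyBinom_of_neg _ hb]
  rw [polyBinom_of_nonneg _ hb, coeff_smul, coeff_eq_zero_of_natDegree_lt, smul_zero]
  rw [natDegree_comp, descPochhammer_natDegree, natDegree_X_add_C]
  omega

theorem coeff_polyBinom_toNat (a : ℤ) {b : ℤ} (hb : 0 ≤ b) :
    (polyBinom a b).coeff b.toNat = (b.toNat.factorial : ℚ)⁻¹ := by
  have hmonic := ((monic_descPochhammer ℚ b.toNat).comp_X_add_C (a : ℚ)).coeff_natDegree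
  rw [natDegree_comp, descPochhammer_natDegree, natDegree_X_add_C, mul_one] at hmonic
  rw [polyBinom_of_nonneg _ hb, coeff_smul, hmonic, smul_eq_mul, mul_one]

theorem sum_range_polyBinom_row (a b : ℤ) (m : ℕ) :
    ∑ k ∈ range m, polyBinom (a - (k + 1)) (b - 1) = polyBinom a b - polyBinom (a - m) b := by
  induction m with
  | zero => simp
  | succ m ih =>
    have hpascal := polyBinom_add_one (a - (m + 1)) b
    rw [show a - (m + 1) + 1 = a - m by ring] at hpascal
    rw [sum_range_succ, ih, Nat.cast_succ, hpascal]
    ring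

theorem sum_range_polyBinom_column (c : ℤ) (m : ℕ) :
    ∑ i ∈ range m, polyBinom (i - c) i = polyBinom (m - c) (m - 1) := by
  induction m with
  | zero => simp [polyBinom_of_neg]
  | succ m ih =>
    have hpascal := polyBinom_add_one (m - c) m
    rw [sum_range_succ, ih]
    push_cast
    rw [add_sub_cancel_right, show (m : ℤ) + 1 - c = m - c + 1 by ring, hpascal, add_comm]

theorem Nat.lt_count_iff_of_antitone {p : ℕ → Prop} [DecidablePred p] (hp : Antitone p) {i n : ℕ} :
    i < Nat.count p n ↔ i < n ∧ p i := by
  constructor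
  · intro hi
    have hin : i < n := hi.trans_le (Nat.count_le p)
    refine ⟨hin, by_contra fun hpi => ?_⟩
    have htail : Nat.count (fun k => p (i + k)) (n - i) = 0 :=
      Nat.count_iff_forall_not.mpr fun k _ hk => hpi (hp (Nat.le_add_right i k) hk)
    have := Nat.count_add p i (n - i)
    rw [Nat.add_sub_cancel' hin.le, htail, add_zero] at this
    exact absurd (this ▸ hi) (not_lt.mpr (Nat.count_le p))
  · rintro ⟨hin, hpi⟩
    calc i < Nat.count p (i + 1) := by
          rw [Nat.count_iff_forall.mpr fun k hk => hp (Nat.lt_succ_iff.mp hk) hpi]; omega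
      _ ≤ Nat.count p n := Nat.count_monotone p hin

def conjugate (l : ℕ → ℕ) (n k : ℕ) : ℕ := Nat.count (fun i => k < l i) n

theorem lt_conjugate_iff {l : ℕ → ℕ} (hl : Antitone l) {n k i : ℕ} :
    i < conjugate l n k ↔ i < n ∧ k < l i :=
  Nat.lt_count_iff_of_antitone fun _ _ hij hk => hk.trans_le (hl hij)

theorem conjugate_antitone (l : ℕ → ℕ) (n : ℕ) : Antitone (conjugate l n) :=
  fun _ _ hkk' => Nat.count_mono_left fun _ _ h => hkk'.trans_lt h

theorem sum_sum_conjugate {M : Type*} [AddCommMonoid M] {l : ℕ → ℕ} (hl : Antitone l) (n : ℕ)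
    (f : ℕ → ℕ → M) :
    ∑ i ∈ range n, ∑ k ∈ range (l i), f i k =
      ∑ k ∈ range (l 0), ∑ i ∈ range (conjugate l n k), f i k :=
  sum_comm' fun i k => by
    simp only [mem_range, lt_conjugate_iff hl]
    exact ⟨fun h => ⟨h, h.2.trans_le (hl (Nat.zero_le i))⟩, fun h => h.1⟩

theorem gotzmannSum_succ (r : ℕ) (c : ℕ → ℤ) :
    gotzmannSum (r + 1) (fun j => c j) =
      polyBinom (c 0) (c 0) + (gotzmannSum r (fun j => c (j + 1))).comp (X - 1) := by
  simp only [gotzmannSum, Fin.sum_univ_succ, Polynomial.sum_comp, polyBinom_comp_X_sub_one,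
    Fin.val_zero, Fin.val_succ, Nat.cast_zero, sub_zero, Nat.cast_succ, sub_add_eq_sub_sub]

theorem coeff_gotzmannSum_of_lt {c : ℕ → ℤ} (hc : Antitone c) (r : ℕ) {k : ℕ} (hk : c 0 < k) :
    (gotzmannSum r (fun j => c j)).coeff k = 0 := by
  rw [gotzmannSum, finsetSum_coeff]
  exact sum_eq_zero fun j _ => coeff_polyBinom_of_lt _ ((hc (Nat.zero_le j)).trans_lt hk)

theorem degree_gotzmannSum_succ {c : ℕ → ℤ} (hc : Antitone c) (h0 : 0 ≤ c 0) (r : ℕ) :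
    (gotzmannSum (r + 1) (fun j => c j)).degree = (c 0).toNat := by
  refine degree_eq_of_le_of_coeff_ne_zero ?_ (ne_of_gt ?_)
  · rw [degree_le_iff_coeff_zero]
    intro k hk
    have hk' : (c 0).toNat < k := by exact_mod_cast hk
    exact coeff_gotzmannSum_of_lt hc _ (by omega)
  · rw [gotzmannSum, finsetSum_coeff]
    refine sum_pos' (fun j _ => ?_) ⟨0, mem_univ _, ?_⟩
    · obtain hlt | heq := (hc (Nat.zero_le j)).lt_or_eq
      · rw [coeff_polyBinom_of_lt _ (by omega)]
      · rw [heq, coeff_polyBinom_toNat _ h0]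
        positivity
    · rw [Fin.val_zero, coeff_polyBinom_toNat _ h0]
      positivity

theorem gotzmannSum_succ_ne_zero {c : ℕ → ℤ} (hc : Antitone c) (h0 : 0 ≤ c 0) (r : ℕ) :
    gotzmannSum (r + 1) (fun j => c j) ≠ 0 := by
  simp [← degree_eq_bot, degree_gotzmannSum_succ hc h0]

theorem Polynomial.comp_X_sub_one_injective {R : Type*} [CommRing R] :
    Function.Injective fun p : R[X] => p.comp (X - 1) := by
  intro p q h
  rw [← sub_eq_zero, ← comp_X_add_C_eq_zero_iff (t := -1), sub_comp]
  simpa [sub_eq_add_neg] using sub_eq_zero.mpr h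

theorem gotzmannSum_inj {r r' : ℕ} {c c' : ℕ → ℤ} (hc : Antitone c) (hc' : Antitone c')
    (hr : ∀ j < r, 0 ≤ c j) (hr' : ∀ j < r', 0 ≤ c' j)
    (h : gotzmannSum r (fun j => c j) = gotzmannSum r' (fun j => c' j)) :
    r = r' ∧ ∀ j < r, c j = c' j := by
  induction r generalizing r' c c' with
  | zero =>
    cases r' with
    | zero => simp
    | succ r' => exact absurd h.symm (gotzmannSum_succ_ne_zero hc' (hr' 0 r'.succ_pos) r')
  | succ r ih =>
    cases r' with
    | zero => exact absurd h (gotzmannSum_succ_ne_zero hc (hr 0 r.succ_pos) r)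
    | succ r' =>
      have hdeg := congrArg degree h
      rw [degree_gotzmannSum_succ hc (hr 0 r.succ_pos),
        degree_gotzmannSum_succ hc' (hr' 0 r'.succ_pos), Nat.cast_inj] at hdeg
      have hhead : c 0 = c' 0 := by
        have := hr 0 r.succ_pos; have := hr' 0 r'.succ_pos; omega
      rw [gotzmannSum_succ, gotzmannSum_succ, hhead, add_right_inj] at h
      obtain ⟨rfl, htail⟩ := ih (c := fun j => c (j + 1)) (c' := fun j => c' (j + 1))
        (fun _ _ h => hc (by omega)) (fun _ _ h => hc' (by omega))
        (fun j hj => hr _ (by omega)) (fun j hj => hr' _ (by omega))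
        (comp_X_sub_one_injective h)
      refine ⟨rfl, fun j hj => ?_⟩
      cases j with
      | zero => exact hhead
      | succ j => exact htail j (by omega)

theorem sum_range_mh_eq_gotzmannSum {l : ℕ → ℕ} (hl : Antitone l) (n : ℕ) :
    ∑ i ∈ range n, (polyBinom i (i + 1) - polyBinom (i - l i) (i + 1)) =
      gotzmannSum (l 0) (fun k => (conjugate l n k : ℤ) - 1) :=
  calc _ = ∑ i ∈ range n, ∑ k ∈ range (l i), polyBinom (i - (k + 1)) i := by
        refine sum_congr rfl fun i _ => ?_
        rw [← sum_range_polyBinom_row, add_sub_cancel_right]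
    _ = ∑ k ∈ range (l 0), ∑ i ∈ range (conjugate l n k), polyBinom (i - (k + 1)) i :=
        sum_sum_conjugate hl _ _
    _ = _ := by
        rw [gotzmannSum, Fin.sum_univ_eq_sum_range (fun k =>
          polyBinom ((conjugate l n k : ℤ) - 1 - k) ((conjugate l n k : ℤ) - 1))]
        refine sum_congr rfl fun k _ => ?_
        rw [sum_range_polyBinom_column]
        ring_nf

def rowLen (d : ℕ) (e : Fin (d + 1) → ℤ) (i : ℕ) : ℕ :=
  (if h : i ≤ d then e ⟨i, Nat.lt_succ_of_le h⟩ else 0).toNat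

theorem rowLen_val {d : ℕ} (e : Fin (d + 1) → ℤ) (i : Fin (d + 1)) :
    rowLen d e i = (e i).toNat := by
  simp [rowLen, Nat.le_of_lt_succ i.isLt]

theorem rowLen_antitone {d : ℕ} {e : Fin (d + 1) → ℤ} (he : Antitone e) :
    Antitone (rowLen d e) := by
  intro i k hik
  by_cases hk : k ≤ d
  · simp only [rowLen, dif_pos hk, dif_pos (hik.trans hk)]
    exact Int.toNat_le_toNat (he (Fin.mk_le_mk.mpr hik))
  · simp [rowLen, hk]

theorem mhSum_eq_sum_range {d : ℕ} {e : Fin (d + 1) → ℤ} (hepos : ∀ i, 0 ≤ e i) :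
    mhSum d e =
      ∑ i ∈ range (d + 1), (polyBinom i (i + 1) - polyBinom (i - rowLen d e i) (i + 1)) := by
  rw [mhSum, ← Fin.sum_univ_eq_sum_range]
  refine sum_congr rfl fun i _ => ?_
  rw [rowLen_val, Int.toNat_of_nonneg (hepos i)]

theorem conjugate_rowLen_eq {d : ℕ} {e : Fin (d + 1) → ℤ} (he : Antitone e) {i k : ℕ}
    (hi : i ≤ d)
    (hlt : (if h : i + 1 ≤ d then e ⟨i + 1, Nat.lt_succ_of_le h⟩ else 0) < (k : ℤ) + 1)
    (hle : (k : ℤ) + 1 ≤ e ⟨i, Nat.lt_succ_of_le hi⟩) :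
    conjugate (rowLen d e) (d + 1) k = i + 1 := by
  have hupper : ¬ i + 1 < conjugate (rowLen d e) (d + 1) k := by
    rw [lt_conjugate_iff (rowLen_antitone he)]
    rintro ⟨hid, hk⟩
    rw [dif_pos (Nat.lt_succ_iff.mp hid)] at hlt
    simp only [rowLen, dif_pos (Nat.lt_succ_iff.mp hid)] at hk
    omega
  have hlower : i < conjugate (rowLen d e) (d + 1) k := by
    rw [lt_conjugate_iff (rowLen_antitone he)]
    refine ⟨Nat.lt_succ_of_le hi, ?_⟩
    simp only [rowLen, dif_pos hi]
    omega
  omega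

theorem antitone_extend_zero {r : ℕ} {b : Fin r → ℤ} (hb : Antitone b) (hbnn : ∀ j, 0 ≤ b j) :
    Antitone fun j : ℕ => if h : j < r then b ⟨j, h⟩ else 0 := by
  intro j k hjk
  by_cases hk : k < r
  · simp only [dif_pos hk, dif_pos (hjk.trans_lt hk)]
    exact hb (Fin.mk_le_mk.mpr hjk)
  · by_cases hj : j < r <;> simp [hk, hj, hbnn]

/-- If `p` has a Macaulay–Hartshorne expression with partition `(e_0,…,e_d)` and a
Gotzmann expression with partition `(b_1,…,b_r)`, then `r = e_0` and the partitions are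
conjugate: setting `e_{d+1} := 0`, for `0 ≤ i ≤ d` and `e_{i+1} < j ≤ e_i` one has `b_j = i`.
(Here `j : Fin r` is 0-indexed, so the 1-indexed value is `j + 1`.) -/
theorem statement_1 (p : Polynomial ℚ) (d r : ℕ)
    (e : Fin (d + 1) → ℤ) (b : Fin r → ℤ)
    (he : Antitone e) (hepos : ∀ i, 0 < e i)
    (hb : Antitone b) (hbnn : ∀ j, 0 ≤ b j)
    (hpe : p = mhSum d e) (hpb : p = gotzmannSum r b) :
    (r : ℤ) = e 0 ∧
    ∀ i : ℕ, ∀ hi : i ≤ d, ∀ j : Fin r,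
      (if h : i + 1 ≤ d then e ⟨i + 1, Nat.lt_succ_of_le h⟩ else 0) < ((j : ℕ) : ℤ) + 1 →
      ((j : ℕ) : ℤ) + 1 ≤ e ⟨i, Nat.lt_succ_of_le hi⟩ →
      b j = (i : ℤ) := by
  set c : ℕ → ℤ := fun j => if h : j < r then b ⟨j, h⟩ else 0
  have hbc : b = fun j : Fin r => c j := funext fun j => by simp [c]
  have hl := rowLen_antitone he
  have hconj : Antitone fun k => (conjugate (rowLen d e) (d + 1) k : ℤ) - 1 :=
    fun _ _ h => Int.sub_le_sub_right (Int.ofNat_le.mpr (conjugate_antitone _ _ h)) 1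
  obtain ⟨hr, hbconj⟩ := gotzmannSum_inj (r := r) (r' := rowLen d e 0) (c := c)
    (antitone_extend_zero hb hbnn) hconj (fun j hj => by simp [c, hj, hbnn])
    (fun j hj => by
      have := (lt_conjugate_iff hl (n := d + 1) (i := 0)).mpr ⟨d.succ_pos, hj⟩; omega)
    (by rw [← hbc, ← hpb, hpe, mhSum_eq_sum_range fun i => (hepos i).le,
      sum_range_mh_eq_gotzmannSum hl])
  refine ⟨by simp [hr, rowLen, (hepos 0).le], fun i hi j hlt hle => ?_⟩
  rw [show b j = c j by rw [hbc], hbconj j j.isLt, conjugate_rowLen_eq he hi hlt hle]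
  push_cast
  ring
end

section
/- For a finite word w in the two-letter alphabet {P, L}, define a nonincreasing sequence π(w) of positive integers recursively by π(empty word) = (1), π(P·w) = (e_0 + 1, e_1, …, e_d) and π(L·w) = (e_0, e_0, e_1, …, e_d), where π(w) = (e_0, …, e_d). Let Φ(e_0,…,e_d)(t) := Σ_{i=0}^d [C(t+i, i+1) − C(t+i−e_i, i+1)] ∈ ℚ[t]. Then the map w ↦ Φ(π(w)) is a bijection from the set of finite words in {P, L} onto the set of admissible Hilbert polynomials; in particular, the graph whose vertices are admissible Hilbert polynomials and whose edges join Φ(π(w)) to Φ(π(P·w)) and to Φ(π(L·w)) is an infinite binary tree rooted at the constant polynomial 1. -/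
/-- `p ∈ ℚ[t]` is an admissible Hilbert polynomial if it has a Macaulay–Hartshorne
expression with integers `e_0 ≥ e_1 ≥ … ≥ e_d > 0`. -/
def IsAdmissible (p : Polynomial ℚ) : Prop :=
  ∃ d : ℕ, ∃ e : Fin (d + 1) → ℤ, Antitone e ∧ (∀ i, 0 < e i) ∧ p = mhSum d e

/-- The sequence `π(w)` attached to a word `w` in the alphabet `{P, L}` (with `P = true`
and `L = false`): `π(∅) = (1)`, `π(P·w) = (e_0+1, e_1, …, e_d)` and
`π(L·w) = (e_0, e_0, e_1, …, e_d)` where `π(w) = (e_0, …, e_d)`. -/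
def piWord : List Bool → List ℤ
  | [] => [1]
  | c :: w =>
    match piWord w with
    | [] => [1]
    | e :: rest => if c then (e + 1) :: rest else e :: e :: rest

/-- `Φ(e_0,…,e_d)(t) := Σ_{i=0}^d [C(t+i, i+1) − C(t+i−e_i, i+1)]` for a list. -/
noncomputable def phiList (l : List ℤ) : Polynomial ℚ :=
  ∑ i : Fin l.length,
    (polyBinom ((i : ℕ) : ℤ) (((i : ℕ) : ℤ) + 1) -
      polyBinom (((i : ℕ) : ℤ) - l.get i) (((i : ℕ) : ℤ) + 1))

/-!
The backward difference `∇p(t) = p(t) − p(t−1)` sends `C(t+a, n+1)` to `C(t+a−1, n)`, hence maps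
`Φ(e_0, e_1, …, e_d)` to `Φ(e_1, …, e_d)`, while changing `e_0` alone changes `Φ` by a constant.
By induction on `d`, `Φ` is therefore injective on sequences of positive integers (the last
entry `e_d` survives as the nonzero constant `∇^d Φ`).

On the other side, `π` is a bijection from words onto the nonincreasing sequences of positive
integers: the first letter of `c·w` is `L` exactly when `e_0 = e_1` in `π(c·w)`, and undoing it
(dropping the repeated `e_0`, or lowering `e_0` by one) decreases `Σ e_i`, until `(1) = π(∅)`
is reached.
-/

open Polynomial

lemma polyBinom_natCast (a : ℤ) (n : ℕ) :
    polyBinom a n = (n.factorial : ℚ)⁻¹ • (descPochhammer ℚ n).comp (X + C (a : ℚ)) := by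
  simp [polyBinom]

lemma polyBinom_one (a : ℤ) : polyBinom a 1 = X + C (a : ℚ) := by
  simpa using polyBinom_natCast a 1

section BackDiff

variable {R : Type*} [CommRing R]

noncomputable def backDiff : R[X] →+ R[X] :=
  AddMonoidHom.id _ - (compRingHom (X - 1) : R[X] →+* R[X]).toAddMonoidHom

lemma backDiff_apply (p : R[X]) : backDiff p = p - p.comp (X - 1) := rfl

lemma backDiff_C (c : R) : backDiff (C c) = 0 := by
  simp [backDiff_apply]

end BackDiff

lemma backDiff_polyBinom (a : ℤ) (n : ℕ) :
    backDiff (polyBinom a (n + 1 : ℕ)) = polyBinom (a - 1) n := by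
  have hcomm : (X + C (a : ℚ)).comp (X - 1) = (X - 1 : ℚ[X]).comp (X + C (a : ℚ)) := by
    simp only [add_comp, sub_comp, X_comp, C_comp, one_comp]
    ring
  have hshift : (X - 1 : ℚ[X]).comp (X + C (a : ℚ)) = X + C ((a - 1 : ℤ) : ℚ) := by
    simp
    ring
  have hpascal : descPochhammer ℚ (n + 1) - (descPochhammer ℚ (n + 1)).comp (X - 1)
      = C ((n : ℚ) + 1) * (descPochhammer ℚ n).comp (X - 1) := by
    rw [descPochhammer_succ_comp_X_sub_one, sub_sub_cancel, smul_eq_mul]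
    simp
  rw [backDiff_apply, polyBinom_natCast, polyBinom_natCast, smul_comp, ← smul_sub, comp_assoc,
    hcomm, ← comp_assoc, ← sub_comp, hpascal, mul_comp, C_comp, comp_assoc, hshift,
    ← smul_eq_C_mul, smul_smul, Nat.factorial_succ]
  congr 1
  push_cast
  field_simp

noncomputable def mhTerm (i : ℕ) (e : ℤ) : ℚ[X] :=
  polyBinom i (i + 1) - polyBinom (i - e) (i + 1)

lemma phiList_eq_sum_mhTerm (l : List ℤ) : phiList l = ∑ i : Fin l.length, mhTerm i (l.get i) :=
  rfl

lemma mhTerm_zero (e : ℤ) : mhTerm 0 e = C (e : ℚ) := by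
  simp [mhTerm, polyBinom_one]

lemma backDiff_mhTerm_succ (i : ℕ) (e : ℤ) : backDiff (mhTerm (i + 1) e) = mhTerm i e := by
  have h : ((i + 1 : ℕ) : ℤ) + 1 = ((i + 1 + 1 : ℕ) : ℤ) := by push_cast; rfl
  rw [mhTerm, h, map_sub, backDiff_polyBinom, backDiff_polyBinom, mhTerm]
  congr 2 <;> push_cast <;> ring

lemma phiList_cons (a : ℤ) (t : List ℤ) :
    phiList (a :: t) = C (a : ℚ) + ∑ j : Fin t.length, mhTerm (j + 1) (t.get j) := by
  rw [phiList_eq_sum_mhTerm]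
  refine (Fin.sum_univ_succ (n := t.length) _).trans ?_
  simp [mhTerm_zero]

lemma backDiff_phiList_cons (a : ℤ) (t : List ℤ) : backDiff (phiList (a :: t)) = phiList t := by
  simp only [phiList_cons, map_add, map_sum, backDiff_C, backDiff_mhTerm_succ, zero_add]
  rfl

lemma phiList_cons_sub_phiList_cons (a b : ℤ) (t : List ℤ) :
    phiList (a :: t) - phiList (b :: t) = C ((a - b : ℤ) : ℚ) := by
  simp only [phiList_cons, Int.cast_sub, map_sub]
  ring

lemma phiList_ne_zero {l : List ℤ} (hne : l ≠ []) (hpos : ∀ x ∈ l, 0 < x) : phiList l ≠ 0 := by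
  induction l with
  | nil => exact absurd rfl hne
  | cons a t ih =>
    cases t with
    | nil => simpa [phiList_cons] using (hpos a List.mem_cons_self).ne'
    | cons b t =>
      intro h
      refine ih (List.cons_ne_nil b t) (fun x hx => hpos x (List.mem_cons_of_mem a hx)) ?_
      rw [← backDiff_phiList_cons a, h, map_zero]

lemma phiList_injOn : Set.InjOn phiList {l | ∀ x ∈ l, 0 < x} := by
  intro l hl l' hl' h
  induction l generalizing l' with
  | nil =>
    by_contra hne
    exact phiList_ne_zero (Ne.symm hne) hl' (h.symm.trans (by simp [phiList]))
  | cons a t ih =>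
    cases l' with
    | nil => exact absurd (h.trans (by simp [phiList])) (phiList_ne_zero (by simp) hl)
    | cons b t' =>
      have ht : t = t' := ih (fun x hx => hl x (List.mem_cons_of_mem a hx))
        (fun x hx => hl' x (List.mem_cons_of_mem b hx))
        (by rw [← backDiff_phiList_cons a, h, backDiff_phiList_cons])
      subst ht
      have hab := phiList_cons_sub_phiList_cons a b t
      rw [h, sub_self, eq_comm, C_eq_zero, Int.cast_eq_zero, sub_eq_zero] at hab
      rw [hab]

/-- The sequences `e_0 ≥ ⋯ ≥ e_d > 0` of Macaulay–Hartshorne expressions. -/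
structure IsMHSeq (l : List ℤ) : Prop where
  ne_nil : l ≠ []
  pos : ∀ x ∈ l, 0 < x
  isChain : l.IsChain (· ≥ ·)

lemma phiList_ofFn {d : ℕ} (e : Fin (d + 1) → ℤ) : phiList (List.ofFn e) = mhSum d e := by
  refine Eq.trans ?_ (Fin.sum_congr' _ (List.length_ofFn (f := e)))
  simp only [phiList, List.get_ofFn]
  rfl

lemma isAdmissible_iff_exists_isMHSeq (p : ℚ[X]) :
    IsAdmissible p ↔ ∃ l, IsMHSeq l ∧ phiList l = p := by
  constructor
  · rintro ⟨d, e, he_anti, he_pos, rfl⟩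
    refine ⟨List.ofFn e, ⟨by simp, List.forall_mem_ofFn_iff.mpr he_pos, ?_⟩, phiList_ofFn e⟩
    exact List.sortedGE_iff_isChain.mp (List.sortedGE_ofFn_iff.mpr he_anti)
  · rintro ⟨_ | ⟨a, t⟩, ⟨hne, hpos, hchain⟩, rfl⟩
    · exact absurd rfl hne
    refine ⟨t.length, (a :: t).get, (List.sortedGE_iff_isChain.mpr hchain).antitone_get,
      fun i => hpos _ (List.get_mem _ _), ?_⟩
    rw [← phiList_ofFn, List.ofFn_get]

def piStep : Bool → List ℤ → List ℤ
  | _, [] => [1]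
  | c, e :: rest => if c then (e + 1) :: rest else e :: e :: rest

lemma piWord_cons (c : Bool) (w : List Bool) : piWord (c :: w) = piStep c (piWord w) := by
  rw [piWord]
  cases piWord w <;> rfl

lemma IsMHSeq.sum_pos {l : List ℤ} (h : IsMHSeq l) : 0 < l.sum :=
  List.sum_pos l h.pos h.ne_nil

lemma isMHSeq_piStep {l : List ℤ} (h : IsMHSeq l) (c : Bool) : IsMHSeq (piStep c l) := by
  obtain ⟨hne, hpos, hchain⟩ := h
  obtain _ | ⟨e, rest⟩ := l
  · exact absurd rfl hne
  have he : 0 < e := hpos e List.mem_cons_self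
  cases c
  · refine ⟨List.cons_ne_nil _ _, ?_, List.isChain_cons_cons.mpr ⟨le_rfl, hchain⟩⟩
    simpa [piStep, List.forall_mem_cons, he] using hpos
  · refine ⟨List.cons_ne_nil _ _, ?_, ?_⟩
    · simp only [piStep, if_true, List.forall_mem_cons] at hpos ⊢
      exact ⟨by omega, hpos.2⟩
    · obtain _ | ⟨b, rest⟩ := rest
      · exact List.isChain_singleton _
      obtain ⟨heb, hchain⟩ := List.isChain_cons_cons.mp hchain
      exact List.isChain_cons_cons.mpr ⟨by omega, hchain⟩

lemma IsMHSeq.piStep_ne_singleton_one {l : List ℤ} (h : IsMHSeq l) (c : Bool) :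
    piStep c l ≠ [1] := by
  obtain _ | ⟨e, rest⟩ := l
  · exact absurd rfl h.ne_nil
  have he : 0 < e := h.pos e List.mem_cons_self
  cases c <;> simp [piStep, he.ne']

lemma IsMHSeq.piStep_inj {l l' : List ℤ} (h : IsMHSeq l) (h' : IsMHSeq l') {c c' : Bool}
    (heq : piStep c l = piStep c' l') : c = c' ∧ l = l' := by
  obtain _ | ⟨e, r⟩ := l
  · exact absurd rfl h.ne_nil
  obtain _ | ⟨e', r'⟩ := l'
  · exact absurd rfl h'.ne_nil
  have hchain := h.isChain
  have hchain' := h'.isChain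
  cases c <;> cases c' <;> simp only [piStep, Bool.false_eq_true, if_true, if_false,
    List.cons.injEq] at heq
  · exact ⟨rfl, by simp [heq]⟩
  · obtain ⟨rfl, rfl⟩ := heq
    have := (List.isChain_cons_cons.mp hchain').1
    omega
  · obtain ⟨rfl, rfl⟩ := heq
    have := (List.isChain_cons_cons.mp hchain).1
    omega
  · obtain ⟨he, rfl⟩ := heq
    exact ⟨rfl, by rw [add_right_cancel he]⟩

lemma IsMHSeq.eq_singleton_one_or_exists_piStep {l : List ℤ} (h : IsMHSeq l) :
    l = [1] ∨ ∃ c l', IsMHSeq l' ∧ l'.sum < l.sum ∧ piStep c l' = l := by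
  obtain ⟨hne, hpos, hchain⟩ := h
  obtain _ | ⟨a, _ | ⟨b, t⟩⟩ := l
  · exact absurd rfl hne
  · have ha : 0 < a := hpos a List.mem_cons_self
    obtain rfl | ha : a = 1 ∨ 1 < a := by omega
    · exact .inl rfl
    refine .inr ⟨true, [a - 1], ⟨List.cons_ne_nil _ _, by simpa using ha, .singleton _⟩, ?_, ?_⟩
    · simp
    · simp [piStep]
  · have hpos' : ∀ x ∈ b :: t, 0 < x := fun x hx => hpos x (.tail _ hx)
    have hb : 0 < b := hpos' b List.mem_cons_self
    obtain ⟨hab, htail⟩ := List.isChain_cons_cons.mp hchain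
    obtain rfl | hab := eq_or_lt_of_le hab
    · refine .inr ⟨false, b :: t, ⟨List.cons_ne_nil _ _, hpos', htail⟩, ?_, by simp [piStep]⟩
      simpa using hb
    · refine .inr ⟨true, (a - 1) :: b :: t, ⟨List.cons_ne_nil _ _,
        List.forall_mem_cons.mpr ⟨by omega, hpos'⟩, List.isChain_cons_cons.mpr ⟨by omega, htail⟩⟩,
        by simp, by simp [piStep]⟩

lemma IsMHSeq.exists_piWord_eq {l : List ℤ} (h : IsMHSeq l) : ∃ w, piWord w = l := by
  obtain rfl | ⟨c, l', hl', hsum, rfl⟩ := h.eq_singleton_one_or_exists_piStep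
  · exact ⟨[], rfl⟩
  · obtain ⟨w, rfl⟩ := hl'.exists_piWord_eq
    exact ⟨c :: w, piWord_cons c w⟩
termination_by l.sum.toNat
decreasing_by have := hl'.sum_pos; omega

lemma isMHSeq_piWord (w : List Bool) : IsMHSeq (piWord w) := by
  induction w with
  | nil => exact ⟨List.cons_ne_nil _ _, by simp [piWord], .singleton _⟩
  | cons c w ih => rw [piWord_cons]; exact isMHSeq_piStep ih c

lemma piWord_injective : Function.Injective piWord := by
  intro w w' h
  induction w generalizing w' with
  | nil =>
    cases w' with
    | nil => rfl
    | cons c' v' =>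
      rw [piWord_cons] at h
      exact absurd h.symm ((isMHSeq_piWord v').piStep_ne_singleton_one c')
  | cons c v ih =>
    cases w' with
    | nil =>
      rw [piWord_cons] at h
      exact absurd h ((isMHSeq_piWord v).piStep_ne_singleton_one c)
    | cons c' v' =>
      rw [piWord_cons, piWord_cons] at h
      obtain ⟨rfl, hv⟩ := (isMHSeq_piWord v).piStep_inj (isMHSeq_piWord v') h
      rw [ih hv]

/-- The map `w ↦ Φ(π(w))` is a bijection from the set of finite words in `{P, L}` onto
the set of admissible Hilbert polynomials, and the root (the image of the empty word)
is the constant polynomial `1`. -/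
theorem statement_5 :
    (Function.Injective fun w : List Bool => phiList (piWord w)) ∧
    (Set.range (fun w : List Bool => phiList (piWord w)) = {p : Polynomial ℚ | IsAdmissible p}) ∧
    phiList (piWord []) = 1 := by
  refine ⟨?_, ?_, by simp [piWord, phiList_cons]⟩
  · exact fun w w' h =>
      piWord_injective (phiList_injOn (isMHSeq_piWord w).pos (isMHSeq_piWord w').pos h)
  · ext p
    refine ⟨?_, fun hp => ?_⟩
    · rintro ⟨w, rfl⟩
      exact (isAdmissible_iff_exists_isMHSeq _).mpr ⟨piWord w, isMHSeq_piWord w, rfl⟩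
    · obtain ⟨l, hl, rfl⟩ := (isAdmissible_iff_exists_isMHSeq p).mp hp
      obtain ⟨w, rfl⟩ := hl.exists_piWord_eq
      exact ⟨w, rfl⟩
end
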